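/- Let C, C̄ ∈ ℝ^{m×n} be channels with the same input distribution Π = diag(π_1,...,π_n), π_i > 0. Then C̄ is a convexified Shannon-garbling of C if and only if C is more convexified-Shannon-useful than C̄, i.e., for every utility matrix U ∈ ℝ^{n×m}: max over D ∈ Φ_cS(C) of tr(U·D·Π) ≥ max over D ∈ Φ_cS(C̄) of tr(U·D·Π). -/

import Mathlib

open Matrix BigOperators

def ColStoch {m n : ℕ} (A : Matrix (Fin m) (Fin n) ℝ) : Prop :=
  (∀ i j, 0 ≤ A i j) ∧ ∀ j, ∑ i, A i j = 1

def PhiCS {m n : ℕ} (C : Matrix (Fin m) (Fin n) ℝ) : Set (Matrix (Fin m) (Fin n) ℝ) :=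
  {D | ∃ (k : ℕ) (p : Fin k → ℝ) (A : Fin k → Matrix (Fin m) (Fin m) ℝ)
        (B : Fin k → Matrix (Fin n) (Fin n) ℝ),
      (∀ i, 0 ≤ p i) ∧ (∑ i, p i = 1) ∧ (∀ i, ColStoch (A i)) ∧ (∀ i, ColStoch (B i)) ∧
      D = ∑ i, p i • (A i * C * B i)}

/-!
The forward direction is transitivity of garbling. For the converse, `PhiCS C` is the convex hull
of the compact set of single garblings `A * C * B`, hence (Carathéodory) compact, and it is convex.
If `Cbar` lay outside it, a separating linear functional would, after dividing its coefficients by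
`π`, be a utility matrix for which `Cbar` beats every element of `PhiCS C`.
-/

open Set

theorem IsCompact.convexHull {E : Type*} [AddCommGroup E] [Module ℝ E] [TopologicalSpace E]
    [ContinuousAdd E] [ContinuousSMul ℝ E] [FiniteDimensional ℝ E] {s : Set E}
    (hs : IsCompact s) : IsCompact (_root_.convexHull ℝ s) := by
  have hcarath : _root_.convexHull ℝ s = ⋃ k ∈ Finset.range (Module.finrank ℝ E + 2),
      (fun p : (Fin k → ℝ) × (Fin k → E) => ∑ i, p.1 i • p.2 i) ''
        (stdSimplex ℝ (Fin k) ×ˢ univ.pi fun _ => s) := by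
    refine Subset.antisymm (fun x hx => ?_) (iUnion₂_subset fun k _ => ?_)
    · obtain ⟨ι, _, z, w, hzs, hz, hw0, hw1, rfl⟩ := eq_pos_convex_span_of_mem_convexHull hx
      have hcard : Fintype.card ι < Module.finrank ℝ E + 2 :=
        Nat.lt_succ_of_le (hz.card_le_finrank_succ.trans
          (Nat.succ_le_succ (Submodule.finrank_le _)))
      let e := (Fintype.equivFin ι).symm
      refine mem_biUnion (Finset.mem_range.2 hcard) ⟨(w ∘ e, z ∘ e), ⟨⟨fun i => (hw0 _).le, ?_⟩,
        fun i _ => hzs (mem_range_self _)⟩, e.sum_comp fun i => w i • z i⟩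
      simpa [e.sum_comp w] using hw1
    · rintro _ ⟨⟨w, z⟩, ⟨hw, hz⟩, rfl⟩
      exact mem_convexHull_of_exists_fintype w z hw.1 hw.2 (fun i => hz i trivial) rfl
  rw [hcarath]
  exact (Finset.range _).isCompact_biUnion fun k _ =>
    ((isCompact_stdSimplex _ _).prod (isCompact_univ_pi fun _ => hs)).image (by fun_prop)

instance Matrix.instLocallyConvexSpace {m n : Type*} : LocallyConvexSpace ℝ (Matrix m n ℝ) :=
  inferInstanceAs (LocallyConvexSpace ℝ (m → n → ℝ))

theorem Matrix.exists_trace_mul_diagonal_eq {K m n : Type*} [Field K] [Fintype m] [Fintype n]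
    [DecidableEq m] [DecidableEq n] {π : n → K} (hπ : ∀ j, π j ≠ 0)
    (f : Matrix m n K →ₗ[K] K) :
    ∃ U : Matrix n m K, ∀ D, (U * D * diagonal π).trace = f D := by
  refine ⟨of fun j i => f (single i j 1) / π j, fun D => ?_⟩
  have hf : f D = ∑ i, ∑ j, D i j * f (single i j 1) := by
    conv_lhs => rw [matrix_eq_sum_single D]
    simp only [map_sum]
    refine Finset.sum_congr rfl fun i _ => Finset.sum_congr rfl fun j _ => ?_
    rw [← smul_eq_mul, ← map_smul, smul_single, smul_eq_mul, mul_one]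
  rw [hf, Finset.sum_comm]
  simp only [trace, diag, mul_diagonal]
  simp only [mul_apply, of_apply, Finset.sum_mul]
  refine Finset.sum_congr rfl fun j _ => Finset.sum_congr rfl fun i _ => ?_
  field_simp [hπ j]

section ColStoch

variable {a b c : ℕ}

theorem colStoch_one : ColStoch (1 : Matrix (Fin a) (Fin a) ℝ) :=
  ⟨fun i j => by by_cases h : i = j <;> simp [one_apply, h], fun j => by simp [one_apply]⟩

theorem ColStoch.mul {A : Matrix (Fin a) (Fin b) ℝ} {B : Matrix (Fin b) (Fin c) ℝ}
    (hA : ColStoch A) (hB : ColStoch B) : ColStoch (A * B) := by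
  refine ⟨fun i j => ?_, fun j => ?_⟩
  · rw [mul_apply]
    exact Finset.sum_nonneg fun k _ => mul_nonneg (hA.1 i k) (hB.1 k j)
  calc ∑ i, (A * B) i j = ∑ k, (∑ i, A i k) * B k j := by
        simp only [mul_apply, Finset.sum_mul]; exact Finset.sum_comm
    _ = 1 := by simp [hA.2, hB.2 j]

theorem isCompact_setOf_colStoch : IsCompact {A : Matrix (Fin a) (Fin b) ℝ | ColStoch A} := by
  have hclosed : IsClosed {A : Matrix (Fin a) (Fin b) ℝ | ColStoch A} := by
    simp only [ColStoch, ofPred_and, ofPred_forall]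
    exact (isClosed_iInter fun i => isClosed_iInter fun j => isClosed_le continuous_const
      (continuous_id.matrix_elem i j)).inter
      (isClosed_iInter fun j => isClosed_eq (continuous_finsetSum _ fun i _ =>
        continuous_id.matrix_elem i j) continuous_const)
  refine (isCompact_univ_pi fun _ => isCompact_univ_pi fun _ =>
    isCompact_Icc (a := (0 : ℝ)) (b := 1)).of_isClosed_subset
    hclosed fun A hA i _ j _ => ⟨hA.1 i j, ?_⟩
  exact (Finset.single_le_sum (fun i' _ => hA.1 i' j) (Finset.mem_univ i)).trans_eq (hA.2 j)

end ColStoch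

section PhiCS

variable {m n : ℕ}

def shannonGarblings (C : Matrix (Fin m) (Fin n) ℝ) : Set (Matrix (Fin m) (Fin n) ℝ) :=
  (fun AB : Matrix (Fin m) (Fin m) ℝ × Matrix (Fin n) (Fin n) ℝ => AB.1 * C * AB.2) ''
    ({A | ColStoch A} ×ˢ {B | ColStoch B})

theorem isCompact_shannonGarblings (C : Matrix (Fin m) (Fin n) ℝ) :
    IsCompact (shannonGarblings C) :=
  (isCompact_setOf_colStoch.prod isCompact_setOf_colStoch).image
    ((continuous_fst.matrix_mul continuous_const).matrix_mul continuous_snd)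

theorem phiCS_eq_convexHull (C : Matrix (Fin m) (Fin n) ℝ) :
    PhiCS C = convexHull ℝ (shannonGarblings C) := by
  refine Subset.antisymm ?_ fun D hD => ?_
  · rintro _ ⟨k, p, A, B, hp0, hp1, hA, hB, rfl⟩
    exact (convex_convexHull ℝ _).sum_mem (fun i _ => hp0 i) hp1 fun i _ =>
      subset_convexHull ℝ _ ⟨(A i, B i), ⟨hA i, hB i⟩, rfl⟩
  obtain ⟨ι, _, w, z, hw0, hw1, hz, rfl⟩ := mem_convexHull_iff_exists_fintype.1 hD
  choose AB hAB hzAB using hz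
  let e := (Fintype.equivFin ι).symm
  refine ⟨Fintype.card ι, w ∘ e, fun i => (AB (e i)).1, fun i => (AB (e i)).2, fun i => hw0 _,
    by simpa [e.sum_comp w] using hw1, fun i => (hAB _).1, fun i => (hAB _).2, ?_⟩
  simp only [← hzAB]
  exact (e.sum_comp fun i => w i • ((AB i).1 * C * (AB i).2)).symm

theorem convex_phiCS (C : Matrix (Fin m) (Fin n) ℝ) : Convex ℝ (PhiCS C) :=
  phiCS_eq_convexHull C ▸ convex_convexHull ℝ _

theorem isClosed_phiCS (C : Matrix (Fin m) (Fin n) ℝ) : IsClosed (PhiCS C) :=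
  phiCS_eq_convexHull C ▸ (isCompact_shannonGarblings C).convexHull.isClosed

theorem self_mem_phiCS (C : Matrix (Fin m) (Fin n) ℝ) : C ∈ PhiCS C :=
  ⟨1, fun _ => 1, fun _ => 1, fun _ => 1, fun _ => zero_le_one, by simp,
    fun _ => colStoch_one, fun _ => colStoch_one, by simp⟩

theorem mul_mul_mem_phiCS {C D : Matrix (Fin m) (Fin n) ℝ} {A : Matrix (Fin m) (Fin m) ℝ}
    {B : Matrix (Fin n) (Fin n) ℝ} (hA : ColStoch A) (hB : ColStoch B) (hD : D ∈ PhiCS C) :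
    A * D * B ∈ PhiCS C := by
  obtain ⟨k, p, M, N, hp0, hp1, hM, hN, rfl⟩ := hD
  refine ⟨k, p, fun i => A * M i, fun i => N i * B, hp0, hp1, fun i => hA.mul (hM i),
    fun i => (hN i).mul hB, ?_⟩
  simp only [Matrix.mul_sum, Matrix.sum_mul, Matrix.mul_smul, Matrix.smul_mul, Matrix.mul_assoc]

theorem phiCS_subset_phiCS {C Cbar : Matrix (Fin m) (Fin n) ℝ} (h : Cbar ∈ PhiCS C) :
    PhiCS Cbar ⊆ PhiCS C := by
  rw [phiCS_eq_convexHull Cbar]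
  refine convexHull_min ?_ (convex_phiCS C)
  rintro _ ⟨⟨A, B⟩, ⟨hA, hB⟩, rfl⟩
  exact mul_mul_mem_phiCS hA hB h

end PhiCS

theorem convexified_shannon_theorem_general {m n : ℕ}
    (C Cbar : Matrix (Fin m) (Fin n) ℝ)
    (π : Fin n → ℝ) (hπ : ∀ i, 0 < π i) :
    Cbar ∈ PhiCS C ↔
      ∀ U : Matrix (Fin n) (Fin m) ℝ,
        ∀ Dbar ∈ PhiCS Cbar, ∃ D ∈ PhiCS C,
          (U * D * Matrix.diagonal π).trace ≥ (U * Dbar * Matrix.diagonal π).trace := by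
  refine ⟨fun h U Dbar hDbar => ⟨Dbar, phiCS_subset_phiCS h hDbar, le_rfl⟩, fun h => ?_⟩
  by_contra hCbar
  obtain ⟨f, u, hfC, hfCbar⟩ :=
    geometric_hahn_banach_closed_point (convex_phiCS C) (isClosed_phiCS C) hCbar
  obtain ⟨U, hU⟩ := exists_trace_mul_diagonal_eq (fun j => (hπ j).ne') f.toLinearMap
  obtain ⟨D, hD, hDCbar⟩ := h U Cbar (self_mem_phiCS Cbar)
  rw [ge_iff_le, hU, hU] at hDCbar
  exact (hfC D hD).not_ge (hfCbar.le.trans hDCbar)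

/-- Convexified Shannon's theorem: the convexified Shannon-order is equivalent to
convexified Shannon-usefulness. -/
theorem convexified_shannon_theorem {m n : ℕ}
    (C Cbar : Matrix (Fin m) (Fin n) ℝ) (hC : ColStoch C) (hCbar : ColStoch Cbar)
    (π : Fin n → ℝ) (hπ : ∀ i, 0 < π i) :
    Cbar ∈ PhiCS C ↔
      ∀ U : Matrix (Fin n) (Fin m) ℝ,
        ∀ Dbar ∈ PhiCS Cbar, ∃ D ∈ PhiCS C,
          (U * D * Matrix.diagonal π).trace ≥ (U * Dbar * Matrix.diagonal π).trace :=
  convexified_shannon_theorem_general C Cbar π hπ
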